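/- For a single-process concurrent program P (using only read, write, and skip instructions; no fences or atomic read-writes), the relation relating each TSO game configuration c to the SC game configuration (S(c), M(c̄)), where c̄ is the unique configuration obtained from c by flushing the entire store buffer to memory, is a bisimulation between the TSO game G^TSO(P, Q_F) and the SC game G^SC(P, Q_F), for any variant of update permissions in the TSO game. -/
import Mathlib


/-- A safety game: configurations `C`, player A's configurations `A`
(player B owns the complement), final configurations `F ⊆ A`, and a
transition relation `rel`. Player B tries to reach `F`, player A tries
to avoid it. -/
structure SafetyGame (C : Type*) where
  A : Set C
  F : Set C
  rel : C → C → Prop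
  finalInA : F ⊆ A

namespace SafetyGame

variable {C : Type*} {D : Type*}

/-- An infinite play of the game. -/
def IsPlay (G : SafetyGame C) (p : ℕ → C) : Prop := ∀ i, G.rel (p i) (p (i + 1))

/-- Deadlock-freedom: every configuration has a successor. -/
def NoDeadlock (G : SafetyGame C) : Prop := ∀ c, ∃ c', G.rel c c'

/-- A (history-dependent) strategy for player A maps a history together with a
current configuration owned by A to a successor. -/
def ValidA (G : SafetyGame C) (σ : List C → C → C) : Prop :=
  ∀ l c, c ∈ G.A → G.rel c (σ l c)

def ValidB (G : SafetyGame C) (σ : List C → C → C) : Prop :=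
  ∀ l c, c ∉ G.A → G.rel c (σ l c)

/-- The history of a play strictly before position `n`. -/
def hist (p : ℕ → C) (n : ℕ) : List C := (List.range n).map p

def ConsistentA (G : SafetyGame C) (σ : List C → C → C) (p : ℕ → C) : Prop :=
  ∀ n, p n ∈ G.A → p (n + 1) = σ (hist p n) (p n)

def ConsistentB (G : SafetyGame C) (σ : List C → C → C) (p : ℕ → C) : Prop :=
  ∀ n, p n ∉ G.A → p (n + 1) = σ (hist p n) (p n)

/-- Player A wins from `c`: she has a strategy such that every play from `c`
consistent with it avoids the final configurations. -/
def WinningA (G : SafetyGame C) (c : C) : Prop :=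
  ∃ σ, G.ValidA σ ∧
    ∀ p, G.IsPlay p → p 0 = c → G.ConsistentA σ p → ∀ i, p i ∉ G.F

/-- Player B wins from `c`: she has a strategy such that every play from `c`
consistent with it visits a final configuration. -/
def WinningB (G : SafetyGame C) (c : C) : Prop :=
  ∃ σ, G.ValidB σ ∧
    ∀ p, G.IsPlay p → p 0 = c → G.ConsistentB σ p → ∃ i, p i ∈ G.F

/-- A bisimulation between two safety games: zig, zag, same owner, same finality. -/
def IsBisim (G : SafetyGame C) (H : SafetyGame D) (R : C → D → Prop) : Prop :=
  ∀ c₁ c₂, R c₁ c₂ →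
    (∀ c₃, G.rel c₁ c₃ → ∃ c₄, H.rel c₂ c₄ ∧ R c₃ c₄) ∧
    (∀ c₄, H.rel c₂ c₄ → ∃ c₃, G.rel c₁ c₃ ∧ R c₃ c₄) ∧
    (c₁ ∈ G.A ↔ c₂ ∈ H.A) ∧ (c₁ ∈ G.F ↔ c₂ ∈ H.F)

end SafetyGame

/-- Instructions of a (fence-free, ARW-free) process: read, write, skip. -/
inductive SInstr (X V : Type*) where
  | rd : X → V → SInstr X V
  | wr : X → V → SInstr X V
  | nop : SInstr X V

/-- A single process: a finite-state transition system labelled by instructions. -/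
structure Proc (Q X V : Type*) where
  trans : Set (Q × SInstr X V × Q)

section Single

variable {Q X V : Type*} [DecidableEq X]

/-- The value of `x` visible to the process: the value of the newest buffered
write on `x` (the buffer stores the newest message at the head), or the memory
value if no such write is buffered. -/
def bufVal : List (X × V) → (X → V) → X → V
  | [], mem, x => mem x
  | (y, v) :: b, mem, x => if y = x then v else bufVal b mem x

/-- The memory obtained by flushing the whole buffer (oldest message first). -/
def flushMem : List (X × V) → (X → V) → (X → V)
  | [], mem => mem
  | (y, v) :: b, mem => Function.update (flushMem b mem) y v

/-- A TSO configuration of a single-process program: local state, store buffer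
(newest message at the head), memory. -/
abbrev TConf (Q X V : Type*) := Q × List (X × V) × (X → V)

/-- An SC configuration: local state and memory. -/
abbrev SConf (Q X V : Type*) := Q × (X → V)

/-- TSO instruction steps of the process. -/
inductive TStep (P : Proc Q X V) : TConf Q X V → TConf Q X V → Prop
  | rd {q q' x v b mem} : (q, SInstr.rd x v, q') ∈ P.trans →
      bufVal b mem x = v → TStep P (q, b, mem) (q', b, mem)
  | wr {q q' x v b mem} : (q, SInstr.wr x v, q') ∈ P.trans →
      TStep P (q, b, mem) (q', (x, v) :: b, mem)
  | nop {q q' b mem} : (q, SInstr.nop, q') ∈ P.trans →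
      TStep P (q, b, mem) (q', b, mem)

/-- A TSO update step: the oldest buffered write is committed to memory. -/
inductive TUpd : TConf Q X V → TConf Q X V → Prop
  | upd {q b x v mem} :
      TUpd (q, b ++ [(x, v)], mem) (q, b, Function.update mem x v)

/-- Any number of update steps. -/
def TUpdStar : TConf Q X V → TConf Q X V → Prop := Relation.ReflTransGen TUpd

/-- SC instruction steps of the process. -/
inductive SStep (P : Proc Q X V) : SConf Q X V → SConf Q X V → Prop
  | rd {q q' x v mem} : (q, SInstr.rd x v, q') ∈ P.trans →
      mem x = v → SStep P (q, mem) (q', mem)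
  | wr {q q' x v mem} : (q, SInstr.wr x v, q') ∈ P.trans →
      SStep P (q, mem) (q', Function.update mem x v)
  | nop {q q' mem} : (q, SInstr.nop, q') ∈ P.trans →
      SStep P (q, mem) (q', mem)

/-- Updates allowed (`true`) or forbidden (`false`). -/
def condUpd (allowed : Bool) (c c' : TConf Q X V) : Prop :=
  if allowed then TUpdStar c c' else c' = c

end Single

section Games

variable {Q X V : Type*} [DecidableEq X]

/-- The turn-based TSO safety game on a single-process program `P` with final
local states `QF`. The first component records whose turn it is (`true` =
player A). The four flags state whether player A (resp. B) may perform buffer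
updates before (resp. after) her own move. -/
def tsoGame (P : Proc Q X V) (QF : Set Q) (aBef aAft bBef bAft : Bool) :
    SafetyGame (Bool × TConf Q X V) where
  A := {p | p.1 = true}
  F := {p | p.1 = true ∧ p.2.1 ∈ QF}
  rel := fun p p' => p'.1 = !p.1 ∧ ∃ c₁ c₂,
    condUpd (if p.1 then aBef else bBef) p.2 c₁ ∧ TStep P c₁ c₂ ∧
      condUpd (if p.1 then aAft else bAft) c₂ p'.2
  finalInA := fun _ hp => hp.1

/-- The turn-based SC safety game on a single-process program `P` with final
local states `QF`. -/
def scGame (P : Proc Q X V) (QF : Set Q) : SafetyGame (Bool × SConf Q X V) where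
  A := {p | p.1 = true}
  F := {p | p.1 = true ∧ p.2.1 ∈ QF}
  rel := fun p p' => p'.1 = !p.1 ∧ SStep P p.2 p'.2
  finalInA := fun _ hp => hp.1

end Games

section Aux

variable {Q X V : Type*} [DecidableEq X]

lemma flushMem_append (b : List (X × V)) (x : X) (v : V) (mem : X → V) :
    flushMem (b ++ [(x, v)]) mem = flushMem b (Function.update mem x v) := by
  induction b with
  | nil => rfl
  | cons hd tl ih => cases hd; simp [flushMem, ih]

lemma bufVal_eq_flushMem (b : List (X × V)) (mem : X → V) (x : X) :
    bufVal b mem x = flushMem b mem x := by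
  induction b with
  | nil => rfl
  | cons hd tl ih =>
    cases hd with
    | mk y v =>
      by_cases h : y = x
      · simp [bufVal, flushMem, Function.update, h]
      · simp [bufVal, flushMem, Function.update, h, ih, Ne.symm h]

lemma tupd_flush {c c' : TConf Q X V} (h : TUpd c c') :
    c'.1 = c.1 ∧ flushMem c'.2.1 c'.2.2 = flushMem c.2.1 c.2.2 := by
  cases h with
  | upd => exact ⟨rfl, (flushMem_append _ _ _ _).symm⟩

lemma tupdstar_flush {c c' : TConf Q X V} (h : TUpdStar c c') :
    c'.1 = c.1 ∧ flushMem c'.2.1 c'.2.2 = flushMem c.2.1 c.2.2 := by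
  induction h with
  | refl => exact ⟨rfl, rfl⟩
  | tail _ hstep ih =>
    obtain ⟨h1, h2⟩ := tupd_flush hstep
    exact ⟨h1.trans ih.1, h2.trans ih.2⟩

lemma condUpd_flush {a : Bool} {c c' : TConf Q X V} (h : condUpd a c c') :
    c'.1 = c.1 ∧ flushMem c'.2.1 c'.2.2 = flushMem c.2.1 c.2.2 := by
  cases a with
  | true => exact tupdstar_flush h
  | false => subst h; exact ⟨rfl, rfl⟩

lemma condUpd_refl (a : Bool) (c : TConf Q X V) : condUpd a c c := by
  cases a with
  | true => exact Relation.ReflTransGen.refl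
  | false => rfl

lemma tstep_sstep {P : Proc Q X V} {c c' : TConf Q X V} (h : TStep P c c') :
    SStep P (c.1, flushMem c.2.1 c.2.2) (c'.1, flushMem c'.2.1 c'.2.2) := by
  cases h with
  | rd ht hv => exact SStep.rd ht (by rw [← bufVal_eq_flushMem]; exact hv)
  | wr ht => exact SStep.wr ht
  | nop ht => exact SStep.nop ht

end Aux

/-- **SC/TSO bisimulation for single-process programs.** For a single-process
program without fences and atomic read-writes, relating each TSO game
configuration `c` to the SC game configuration with the same turn, the same
local state, and the memory obtained by flushing the whole buffer of `c`
yields a bisimulation between the TSO game (for any variant of update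
permissions) and the SC game. -/
theorem single_process_tso_sc_bisim {Q X V : Type*} [DecidableEq X]
    (P : Proc Q X V) (QF : Set Q) (aBef aAft bBef bAft : Bool) :
    SafetyGame.IsBisim (tsoGame P QF aBef aAft bBef bAft) (scGame P QF)
      (fun p s => s.1 = p.1 ∧ s.2 = (p.2.1, flushMem p.2.2.1 p.2.2.2)) := by
  rintro ⟨t, q, b, mem⟩ ⟨t', sc⟩ ⟨ht, hs⟩
  dsimp only at ht hs
  subst ht hs
  refine ⟨?_, ?_, Iff.rfl, Iff.rfl⟩
  · rintro ⟨t₃, c₃⟩ ⟨ht₃, c₁, c₂, h₁, h₂, h₃⟩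
    obtain ⟨e1, e2⟩ := condUpd_flush h₁
    obtain ⟨f1, f2⟩ := condUpd_flush h₃
    refine ⟨(t₃, c₃.1, flushMem c₃.2.1 c₃.2.2), ⟨ht₃, ?_⟩, rfl, rfl⟩
    have := tstep_sstep (P := P) h₂
    rw [e1, e2] at this
    rw [← f1, ← f2] at this
    exact this
  · rintro ⟨t₄, s₄⟩ ⟨ht₄, hstep⟩
    dsimp only at ht₄ hstep ⊢
    cases hstep with
    | @rd _ q' x v _ htr hv =>
      exact ⟨(t₄, q', b, mem),
        ⟨ht₄, _, _, condUpd_refl _ _,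
          TStep.rd htr (by rw [bufVal_eq_flushMem]; exact hv), condUpd_refl _ _⟩,
        rfl, rfl⟩
    | @wr _ q' x v _ htr =>
      exact ⟨(t₄, q', (x, v) :: b, mem),
        ⟨ht₄, _, _, condUpd_refl _ _, TStep.wr htr, condUpd_refl _ _⟩, rfl, rfl⟩
    | @nop _ q' _ htr =>
      exact ⟨(t₄, q', b, mem),
        ⟨ht₄, _, _, condUpd_refl _ _, TStep.nop htr, condUpd_refl _ _⟩, rfl, rfl⟩
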